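/- arXiv:2306.06197 — 3 statements merged into one kernel-verified Lean document; each statement's English description precedes it below -/
import Mathlib

section
/- In the normal game on the 1×n board with target string SOSO = [S,O,S,O], for every n the game is a draw: neither player can force a win. -/
/-- The two letters of the SOS game. -/
inductive Letter : Type
  | S : Letter
  | O : Letter
  deriving DecidableEq

open Letter

/-- The target string `t` occurs left-to-right as a consecutive block on the
linear board `b`. -/
def Achieves {n : ℕ} (t : List Letter) (b : Fin n → Option Letter) : Prop :=
  ∃ i : ℕ, ∀ j : ℕ, (hj : j < t.length) → ∃ h : i + j < n,
    b ⟨i + j, h⟩ = some (t.get ⟨j, hj⟩)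

/-- `Force Win m w b`: the player to move in position `b` (with `m` remaining moves,
i.e. `m` empty cells) can force a win when `w = true`, resp. can force at least a
draw when `w = false`, in the normal game whose winning boards are given by `Win`
(a player wins if the board satisfies `Win` immediately after their move). -/
def Force {α : Type} [DecidableEq α] (Win : (α → Option Letter) → Prop) :
    ℕ → Bool → (α → Option Letter) → Prop
  | 0, w, _ => w = false
  | m + 1, w, b => ∃ i : α, ∃ x : Letter, b i = none ∧
      (Win (Function.update b i (some x)) ∨
        ¬ Force Win m (!w) (Function.update b i (some x)))

/-- The first player can force a win in the normal game with target `t`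
on the (initially empty) 1×n board. -/
def FirstWins (t : List Letter) (n : ℕ) : Prop :=
  Force (Achieves t) n true (fun _ : Fin n => none)

/-- The second player can force a win in the normal game with target `t`
on the (initially empty) 1×n board: the first player (to move) cannot even
force a draw. -/
def SecondWins (t : List Letter) (n : ℕ) : Prop :=
  ¬ Force (Achieves t) n false (fun _ : Fin n => none)

/-- The normal game with target `t` on the 1×n board is a draw under optimal
play: the first player can force at least a draw, and the second player can
force at least a draw (i.e. the first player cannot force a win). -/
def IsDraw (t : List Letter) (n : ℕ) : Prop :=
  Force (Achieves t) n false (fun _ : Fin n => none) ∧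
    ¬ Force (Achieves t) n true (fun _ : Fin n => none)

/-!
Whoever is to move can force a draw. If a single letter completes SOSO, play it; otherwise fill
the leftmost empty cell `i` with a letter after which no single letter completes SOSO, so that
the opponent cannot win at once either. Since every cell left of `i` is filled, a new threat lies
in a window containing `i` and an empty cell to its right. For `O` at `i` this window is
`i-1, …, i+2`, which needs `S` at `i-1` and `S` at `i+1` or `O` at `i+2`; for `S` at `i` it is
`i-2, …, i+1`, needing `O` at `i-1`, or `i, …, i+3`, excluding `S` at `i+1` and `O` at `i+2`.
The two are incompatible, so one of the letters is safe.
-/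

open Function Finset

section Strategy

variable {α : Type} [DecidableEq α]

lemma card_filter_update_eq_none_add_one [Fintype α] {b : α → Option Letter} {i : α}
    (hi : b i = none) (x : Letter) :
    #{j | update b i (some x) j = none} + 1 = #{j | b j = none} := by
  have : ({j | update b i (some x) j = none} : Finset α) =
      ({j | b j = none} : Finset α).erase i := by
    ext j
    rcases eq_or_ne j i with rfl | hj <;> simp [*]
  rw [this, Finset.card_erase_add_one (by simpa using hi)]

variable (Win : (α → Option Letter) → Prop)

def Threat (b : α → Option Letter) : Prop :=
  ∃ i x, b i = none ∧ Win (update b i (some x))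

variable [Fintype α]

theorem force_false_and_not_force_true_of_safe_move
    (hsafe : ∀ b, ¬ Threat Win b → ∀ i, b i = none →
      ∃ j x, b j = none ∧ ¬ Threat Win (update b j (some x)))
    (m : ℕ) (b : α → Option Letter) (hm : m ≤ #{i | b i = none}) :
    Force Win m false b ∧ (¬ Threat Win b → ¬ Force Win m true b) := by
  induction m generalizing b with
  | zero => exact ⟨rfl, fun _ h => Bool.noConfusion h⟩
  | succ m ih =>
    have hm' : ∀ i x, b i = none → m ≤ #{j | update b i (some x) j = none} := fun i x hi => by
      have := card_filter_update_eq_none_add_one hi x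
      omega
    refine ⟨?_, ?_⟩
    · by_cases hT : Threat Win b
      · obtain ⟨i, x, hi, hwin⟩ := hT
        exact ⟨i, x, hi, Or.inl hwin⟩
      · obtain ⟨i, hi⟩ : ∃ i, b i = none := by
          simpa [Finset.Nonempty] using Finset.card_pos.mp (by omega : 0 < #{i | b i = none})
        obtain ⟨j, x, hj, hsafe'⟩ := hsafe b hT i hi
        exact ⟨j, x, hj, Or.inr ((ih _ (hm' j x hj)).2 hsafe')⟩
    · rintro hT ⟨i, x, hi, hwin | hdraw⟩
      · exact hT ⟨i, x, hi, hwin⟩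
      · exact hdraw (ih _ (hm' i x hi)).1

end Strategy

section LinearBoard

def cell {n : ℕ} (b : Fin n → Option Letter) (k : ℕ) : Option Letter :=
  if h : k < n then b ⟨k, h⟩ else none

lemma cell_of_lt {n : ℕ} (b : Fin n → Option Letter) {k : ℕ} (h : k < n) :
    cell b k = b ⟨k, h⟩ := dif_pos h

lemma lt_of_cell_eq_some {n : ℕ} {b : Fin n → Option Letter} {k : ℕ} {x : Letter}
    (h : cell b k = some x) : k < n := by
  by_contra hk
  simp [cell, hk] at h

lemma cell_update {n : ℕ} (b : Fin n → Option Letter) (i : Fin n) (v : Option Letter) :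
    cell (update b i v) = update (cell b) i v := by
  funext k
  by_cases hk : k < n
  · rcases eq_or_ne k i with rfl | hki
    · simp [cell_of_lt _ hk]
    · rw [cell_of_lt _ hk, update_of_ne hki, update_of_ne (Fin.ne_of_val_ne hki), cell_of_lt _ hk]
  · rw [update_of_ne (by omega), cell, dif_neg hk, cell, dif_neg hk]

def OccursAt (t : List Letter) (c : ℕ → Option Letter) (s : ℕ) : Prop :=
  ∀ j (hj : j < t.length), c (s + j) = some (t.get ⟨j, hj⟩)

lemma achieves_iff_exists_occursAt {n : ℕ} (t : List Letter) (b : Fin n → Option Letter) :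
    Achieves t b ↔ ∃ s, OccursAt t (cell b) s := by
  refine exists_congr fun s => forall₂_congr fun j hj => ⟨?_, fun h => ?_⟩
  · rintro ⟨h, hb⟩
    rwa [cell_of_lt b h]
  · have h' := lt_of_cell_eq_some h
    exact ⟨h', by rwa [cell_of_lt b h'] at h⟩

lemma occursAt_update_iff {t : List Letter} {c : ℕ → Option Letter} {k s : ℕ}
    (hk : k < s ∨ s + t.length ≤ k) (v : Option Letter) :
    OccursAt t (update c k v) s ↔ OccursAt t c s :=
  forall₂_congr fun j hj => by rw [update_of_ne (by omega)]

/-- The bound `k < n` matters: `cell` leaves the cells beyond the board empty. -/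
def ThreatBelow (t : List Letter) (n : ℕ) (c : ℕ → Option Letter) : Prop :=
  ∃ k < n, c k = none ∧ ∃ y s, OccursAt t (update c k (some y)) s

lemma threat_achieves_iff {n : ℕ} (t : List Letter) (b : Fin n → Option Letter) :
    Threat (Achieves t) b ↔ ThreatBelow t n (cell b) := by
  simp only [Threat, ThreatBelow, achieves_iff_exists_occursAt, cell_update]
  constructor
  · rintro ⟨i, y, hi, hocc⟩
    exact ⟨i, i.isLt, by rwa [cell_of_lt b i.isLt], y, hocc⟩
  · rintro ⟨k, hk, hck, y, hocc⟩
    exact ⟨⟨k, hk⟩, y, by rwa [cell_of_lt b hk] at hck, hocc⟩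

end LinearBoard

lemma mem_window_of_occursAt_update_update {t : List Letter} {n : ℕ} {c : ℕ → Option Letter}
    {i k s : ℕ} {x y : Letter} (hT : ¬ ThreatBelow t n c) (hi : i < n)
    (hci : c i = none) (hk : k < n) (hck : update c i (some x) k = none)
    (hocc : OccursAt t (update (update c i (some x)) k (some y)) s) :
    (s ≤ i ∧ i < s + t.length) ∧ (s ≤ k ∧ k < s + t.length) := by
  have hki : k ≠ i := fun h => by simp [h] at hck
  rw [update_of_ne hki] at hck
  constructor
  · by_contra hout
    rw [update_comm hki.symm, occursAt_update_iff (by omega)] at hocc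
    exact hT ⟨k, hk, hck, y, s, hocc⟩
  · by_contra hout
    rw [occursAt_update_iff (by omega)] at hocc
    exact hT ⟨i, hi, hci, x, s, hocc⟩

lemma occursAt_soso_iff (c : ℕ → Option Letter) (s : ℕ) :
    OccursAt [S, O, S, O] c s ↔
      c s = some S ∧ c (s + 1) = some O ∧ c (s + 2) = some S ∧ c (s + 3) = some O := by
  refine ⟨fun h => ⟨h 0 (by simp), h 1 (by simp), h 2 (by simp), h 3 (by simp)⟩, ?_⟩
  rintro ⟨h0, h1, h2, h3⟩ j hj
  simp only [List.length_cons, List.length_nil] at hj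
  interval_cases j <;> assumption

section Soso

variable {n : ℕ} {c : ℕ → Option Letter} {i : ℕ}

lemma lt_of_update_eq_none (hleft : ∀ k < i, c k ≠ none) {k : ℕ} {x : Letter}
    (hk : update c i (some x) k = none) : i < k := by
  have hki : k ≠ i := fun h => by simp [h] at hk
  rw [update_of_ne hki] at hk
  exact lt_of_le_of_ne (not_lt.mp fun h => hleft k h hk) hki.symm

lemma threatBelow_update_O (hT : ¬ ThreatBelow [S, O, S, O] n c) (hi : i < n)
    (hci : c i = none) (hleft : ∀ k < i, c k ≠ none)
    (h : ThreatBelow [S, O, S, O] n (update c i (some O))) :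
    c (i - 1) = some S ∧ (c (i + 1) = some S ∨ c (i + 2) = some O) := by
  obtain ⟨k, hk, hck, y, s, hocc⟩ := h
  obtain ⟨⟨hsi, his⟩, hsk, hks⟩ := mem_window_of_occursAt_update_update hT hi hci hk hck hocc
  have hik := lt_of_update_eq_none hleft hck
  simp only [List.length_cons, List.length_nil] at his hks
  rw [occursAt_soso_iff] at hocc
  obtain ⟨h0, h1, h2, h3⟩ := hocc
  rcases (show s = i ∨ s + 1 = i ∨ s + 2 = i by omega) with rfl | rfl | rfl
  · simp [update_of_ne hik.ne] at h0
  · rcases (show k = s + 2 ∨ k = s + 3 by omega) with rfl | rfl <;> simp_all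
  · simp [update_of_ne hik.ne] at h2

lemma threatBelow_update_S (hT : ¬ ThreatBelow [S, O, S, O] n c) (hi : i < n)
    (hci : c i = none) (hleft : ∀ k < i, c k ≠ none)
    (h : ThreatBelow [S, O, S, O] n (update c i (some S))) :
    c (i - 1) = some O ∨ (c (i + 1) ≠ some S ∧ c (i + 2) ≠ some O) := by
  obtain ⟨k, hk, hck, y, s, hocc⟩ := h
  obtain ⟨⟨hsi, his⟩, hsk, hks⟩ := mem_window_of_occursAt_update_update hT hi hci hk hck hocc
  have hik := lt_of_update_eq_none hleft hck
  simp only [List.length_cons, List.length_nil] at his hks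
  rw [occursAt_soso_iff] at hocc
  obtain ⟨h0, h1, h2, h3⟩ := hocc
  rcases (show s = i ∨ s + 1 = i ∨ s + 2 = i by omega) with rfl | rfl | rfl
  · rcases (show k = s + 1 ∨ k = s + 2 ∨ k = s + 3 by omega) with rfl | rfl | rfl <;>
      simp_all
  · simp [update_of_ne hik.ne] at h1
  · left
    simpa [update_of_ne (show s + 1 ≠ k by omega)] using h1

lemma exists_not_threatBelow_update (hT : ¬ ThreatBelow [S, O, S, O] n c) (hi : i < n)
    (hci : c i = none) (hleft : ∀ k < i, c k ≠ none) :
    ∃ x, ¬ ThreatBelow [S, O, S, O] n (update c i (some x)) := by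
  by_contra! h
  obtain ⟨hS, hO⟩ := threatBelow_update_O hT hi hci hleft (h O)
  rcases threatBelow_update_S hT hi hci hleft (h S) with hO' | ⟨hS', hO'⟩
  · simp [hS] at hO'
  · tauto

end Soso

lemma exists_safe_move_soso {n : ℕ} (b : Fin n → Option Letter)
    (hT : ¬ Threat (Achieves [S, O, S, O]) b) (i : Fin n) (hi : b i = none) :
    ∃ j x, b j = none ∧ ¬ Threat (Achieves [S, O, S, O]) (update b j (some x)) := by
  have hex : ∃ k, k < n ∧ cell b k = none := ⟨i, i.isLt, by rwa [cell_of_lt b i.isLt]⟩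
  obtain ⟨hj, hbj⟩ := Nat.find_spec hex
  have hleft : ∀ k < Nat.find hex, cell b k ≠ none := fun k hk hbk =>
    Nat.find_min hex hk ⟨hk.trans hj, hbk⟩
  rw [threat_achieves_iff] at hT
  obtain ⟨x, hx⟩ := exists_not_threatBelow_update hT hj hbj hleft
  refine ⟨⟨Nat.find hex, hj⟩, x, by rwa [cell_of_lt b hj] at hbj, ?_⟩
  rwa [threat_achieves_iff, cell_update]

lemma not_threat_empty_soso (n : ℕ) :
    ¬ Threat (Achieves [S, O, S, O]) (fun _ : Fin n => none) := by
  rintro ⟨i, x, -, hach⟩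
  obtain ⟨s, hocc⟩ := (achieves_iff_exists_occursAt _ _).mp hach
  rw [cell_update, occursAt_soso_iff] at hocc
  obtain ⟨h0, h1, -⟩ := hocc
  rcases eq_or_ne s i with rfl | hs
  · simp [cell] at h1
  · simp [update_of_ne hs, cell] at h0

/-- The normal game on the 1×n board with target string SOSO is a draw for
every `n`: neither player can force a win. -/
theorem soso_game_draw (n : ℕ) : IsDraw [S, O, S, O] n := by
  obtain ⟨hdraw, hnowin⟩ := force_false_and_not_force_true_of_safe_move _
    exists_safe_move_soso n (fun _ : Fin n => none) (by simp)
  exact ⟨hdraw, hnowin (not_threat_empty_soso n)⟩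
end

section
/- For every n, the misère game on the 1×n board with target string SOO = [S,O,O] is a draw: each player has a strategy guaranteeing that they themselves never make the board achieve SOO. -/
open Letter

/-- `MisereSafe Win m w b`: in the misère game (where the player who first
produces a board satisfying `Win` loses), with `m` empty cells remaining in
position `b`, the tracked player can guarantee that they themselves never make
the board satisfy `Win`.  Here `w = true` means it is the tracked player's
turn, and `w = false` means it is the opponent's turn; if the opponent's move
makes the board satisfy `Win` the game ends (the opponent has lost). -/
def MisereSafe {α : Type} [DecidableEq α] (Win : (α → Option Letter) → Prop) :
    ℕ → Bool → (α → Option Letter) → Prop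
  | 0, _, _ => True
  | m + 1, true, b => ∃ i : α, ∃ x : Letter, b i = none ∧
      ¬ Win (Function.update b i (some x)) ∧
      MisereSafe Win m false (Function.update b i (some x))
  | m + 1, false, b => ∀ i : α, ∀ x : Letter, b i = none →
      (Win (Function.update b i (some x)) ∨
        MisereSafe Win m true (Function.update b i (some x)))

/-- The misère game with target `t` on the (initially empty) 1×n board is a
draw under optimal play: each of the two players has a strategy guaranteeing
that they themselves never make the board achieve `t`. -/
def MisereDraw (t : List Letter) (n : ℕ) : Prop :=
  MisereSafe (Achieves t) n true (fun _ : Fin n => none) ∧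
    MisereSafe (Achieves t) n false (fun _ : Fin n => none)

/-! ### Auxiliary machinery for the proof -/

/-- Explicit form of an SOO occurrence. -/
def Occ {n : ℕ} (b : Fin n → Option Letter) : Prop :=
  ∃ i : ℕ, ∃ h : i + 2 < n,
    b ⟨i, by omega⟩ = some S ∧ b ⟨i + 1, by omega⟩ = some O ∧ b ⟨i + 2, h⟩ = some O

lemma achieves_iff {n : ℕ} (b : Fin n → Option Letter) :
    Achieves [S, O, O] b ↔ Occ b := by
  constructor
  · rintro ⟨i, hi⟩
    obtain ⟨h0, e0⟩ := hi 0 (by norm_num)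
    obtain ⟨h1, e1⟩ := hi 1 (by norm_num)
    obtain ⟨h2, e2⟩ := hi 2 (by norm_num)
    exact ⟨i, h2, e0, e1, e2⟩
  · rintro ⟨i, h, e0, e1, e2⟩
    refine ⟨i, ?_⟩
    intro j hj
    have hj3 : j < 3 := by simpa using hj
    interval_cases j
    · exact ⟨by omega, e0⟩
    · exact ⟨by omega, e1⟩
    · exact ⟨by omega, e2⟩

/-- Every `O` on the board is "capped": its left neighbour is filled
(or it sits on the leftmost cell). -/
def Capped {n : ℕ} (b : Fin n → Option Letter) : Prop :=
  ∀ k : ℕ, (h : k + 1 < n) → b ⟨k + 1, h⟩ = some O → b ⟨k, by omega⟩ ≠ none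

/-- Number of empty cells. -/
noncomputable def E {n : ℕ} (b : Fin n → Option Letter) : ℕ :=
  (Finset.univ.filter (fun i => b i = none)).card

lemma E_update {n : ℕ} (b : Fin n → Option Letter) (i : Fin n) (x : Letter)
    (h : b i = none) : E (Function.update b i (some x)) + 1 = E b := by
  classical
  unfold E
  have hset : (Finset.univ.filter (fun j => Function.update b i (some x) j = none))
      = (Finset.univ.filter (fun j => b j = none)).erase i := by
    ext j
    by_cases hj : j = i
    · subst hj; simp
    · simp [Function.update_of_ne hj, hj]
  rw [hset]
  exact Finset.card_erase_add_one (by simp [h])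

lemma exists_empty {n : ℕ} (b : Fin n → Option Letter) (h : 0 < E b) :
    ∃ j, b j = none := by
  classical
  obtain ⟨j, hj⟩ := Finset.card_pos.mp h
  exact ⟨j, (Finset.mem_filter.mp hj).2⟩

lemma capped_update_S {n : ℕ} {b : Fin n → Option Letter} (hc : Capped b) (j : Fin n) :
    Capped (Function.update b j (some S)) := by
  intro k hk hO
  rw [Function.update_apply] at hO ⊢
  split_ifs at hO with h1
  · exact absurd hO (by simp)
  split_ifs with h2
  · simp
  · exact hc k hk hO

lemma occ_update_S {n : ℕ} {b : Fin n → Option Letter} (hb : ¬ Occ b) (hc : Capped b)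
    (j : Fin n) (hj : b j = none) : ¬ Occ (Function.update b j (some S)) := by
  rintro ⟨q, h, e0, e1, e2⟩
  rw [Function.update_apply] at e0 e1 e2
  split_ifs at e0 e1 e2 with c0 c1 c2 <;>
    first
      | exact absurd e1 (by simp)
      | exact absurd e2 (by simp)
      | (exact hc q (by omega) e1 (by rw [show (⟨q, by omega⟩ : Fin n) = j from c0]; exact hj))
      | exact hb ⟨q, h, e0, e1, e2⟩

lemma capped_update_O0 {n : ℕ} {b : Fin n → Option Letter} (hc : Capped b) (i : Fin n)
    (h0 : i.val = 0) : Capped (Function.update b i (some O)) := by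
  intro k hk hO
  rw [Function.update_apply] at hO ⊢
  split_ifs at hO with h1
  · exfalso
    have : k + 1 = i.val := by rw [← h1]
    omega
  split_ifs with h2
  · simp
  · exact hc k hk hO

lemma capped_update_O1 {n : ℕ} {b : Fin n → Option Letter} (hc : Capped b) (i : Fin n)
    (k : ℕ) (hkn : k < n) (hk : i.val = k + 1) (hfill : b ⟨k, hkn⟩ ≠ none) :
    Capped (Function.update b i (some O)) := by
  intro t ht hO
  rw [Function.update_apply] at hO ⊢
  split_ifs with h2
  · simp
  split_ifs at hO with h1
  · -- t + 1 = i.val = k + 1, so t = k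
    have htk : t = k := by
      have : t + 1 = i.val := by rw [← h1]
      omega
    subst htk
    exact hfill
  · exact hc t ht hO

lemma cap_good {n : ℕ} {b : Fin n → Option Letter} (hc : Capped b) (k : ℕ)
    (hk1 : k + 1 < n) (h0 : b ⟨k, by omega⟩ = none) (h1 : b ⟨k + 1, hk1⟩ = none)
    (hO : ¬ Occ (Function.update b ⟨k + 1, hk1⟩ (some O))) :
    ¬ Occ (Function.update (Function.update b ⟨k + 1, hk1⟩ (some O)) ⟨k, by omega⟩ (some S))
    ∧ Capped (Function.update (Function.update b ⟨k + 1, hk1⟩ (some O)) ⟨k, by omega⟩ (some S)) := by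
  have hB : ∀ t (ht : t < n),
      Function.update (Function.update b ⟨k + 1, hk1⟩ (some O)) ⟨k, by omega⟩ (some S) ⟨t, ht⟩
        = if t = k then some S else if t = k + 1 then some O else b ⟨t, ht⟩ := by
    intro t ht
    rw [Function.update_apply, Function.update_apply]
    simp only [Fin.mk.injEq]
  constructor
  · rintro ⟨q, h, e0, e1, e2⟩
    rw [hB] at e0 e1 e2
    split_ifs at e0 e1 e2 with c0 c1 c2 c3 c4 c5
    all_goals try omega
    all_goals try exact Letter.noConfusion (Option.some.inj e0)
    all_goals try exact Letter.noConfusion (Option.some.inj e1)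
    all_goals try exact Letter.noConfusion (Option.some.inj e2)
    -- q = k : then b ⟨k+2⟩ = some O, capped forces b ⟨k+1⟩ ≠ none
    all_goals try (subst c0; exact absurd h1 (hc (q + 1) (by omega) e2))
    -- disjoint from both updated cells : occurrence already in b' = update b ⟨k+1⟩ O
    all_goals
      (exact hO ⟨q, h, by
              rw [Function.update_apply]; split_ifs with d0
              · exfalso; have : q = k + 1 := by simpa [Fin.mk.injEq] using d0
                omega
              · exact e0, by
              rw [Function.update_apply]; split_ifs with d1
              · rfl
              · exact e1, by
              rw [Function.update_apply]; split_ifs with d2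
              · rfl
              · exact e2⟩)
  · intro t ht hOt
    rw [hB] at hOt
    rw [hB]
    split_ifs with d0 d1
    · simp
    · simp
    · split_ifs at hOt with c0 c1
      · exact absurd hOt (by simp)
      · omega
      · exact hc t ht hOt

lemma main_safe {n : ℕ} : ∀ m : ℕ,
    (∀ b : Fin n → Option Letter, Capped b → ¬ Occ b → m ≤ E b →
      MisereSafe (Achieves [S, O, O]) m true b) ∧
    (∀ b : Fin n → Option Letter, Capped b → ¬ Occ b → m ≤ E b →
      MisereSafe (Achieves [S, O, O]) m false b) := by
  intro m
  induction m using Nat.strong_induction_on with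
  | _ m IH =>
    rcases m with _ | m'
    · exact ⟨fun b _ _ _ => trivial, fun b _ _ _ => trivial⟩
    constructor
    · -- our turn : play S anywhere
      intro b hc hb hm
      obtain ⟨j, hj⟩ := exists_empty b (by omega)
      have hb' := occ_update_S hb hc j hj
      have hE := E_update b j S hj
      refine ⟨j, S, hj, ?_, ?_⟩
      · intro hA; exact hb' ((achieves_iff _).mp hA)
      · exact (IH m' (Nat.lt_succ_self _)).2 _ (capped_update_S hc j) hb' (by omega)
    · -- opponent's turn
      intro b hc hb hm i x hi
      by_cases hA : Achieves [S, O, O] (Function.update b i (some x))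
      · exact Or.inl hA
      right
      have hOcc' : ¬ Occ (Function.update b i (some x)) :=
        fun hh => hA ((achieves_iff _).mpr hh)
      have hE := E_update b i x hi
      cases x with
      | S =>
          exact (IH m' (Nat.lt_succ_self _)).1 _ (capped_update_S hc i) hOcc' (by omega)
      | O =>
          rcases hk : i.val with _ | k
          · exact (IH m' (Nat.lt_succ_self _)).1 _ (capped_update_O0 hc i hk) hOcc' (by omega)
          · have hkn : k < n := by have := i.isLt; omega
            by_cases hfill : b ⟨k, hkn⟩ = none
            · -- the cap case
              have hieq : i = ⟨k + 1, by have := i.isLt; omega⟩ := by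
                apply Fin.ext; simpa using hk
              rw [hieq] at hi hOcc' hE ⊢
              rcases m' with _ | m''
              · trivial
              obtain ⟨hgood, hcap⟩ := cap_good hc k (by omega) hfill hi hOcc'
              refine ⟨⟨k, hkn⟩, S, ?_, ?_, ?_⟩
              · rw [Function.update_apply]
                split_ifs with hq
                · exfalso
                  have : k = k + 1 := by simpa [Fin.mk.injEq] using hq
                  omega
                · exact hfill
              · intro hA2
                exact hgood ((achieves_iff _).mp hA2)
              · have hE2 := E_update (Function.update b ⟨k + 1, by omega⟩ (some O))
                  ⟨k, hkn⟩ S (by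
                    rw [Function.update_apply]
                    split_ifs with hq
                    · exfalso
                      have : k = k + 1 := by simpa [Fin.mk.injEq] using hq
                      omega
                    · exact hfill)
                exact (IH m'' (by omega)).2 _ hcap hgood (by omega)
            · exact (IH m' (Nat.lt_succ_self _)).1 _
                (capped_update_O1 hc i k hkn hk hfill) hOcc' (by omega)

/-- For every `n`, the misère SOO game on the 1×n board is a draw: each player
has a strategy guaranteeing that they themselves never make the board achieve
SOO. -/
theorem misere_soo_draw (n : ℕ) : MisereDraw [S, O, O] n := by
  have hcap : Capped (fun _ : Fin n => none) := by
    intro k hk hO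
    exact absurd hO (by simp)
  have hocc : ¬ Occ (fun _ : Fin n => none) := by
    rintro ⟨i, h, e0, -, -⟩
    exact absurd e0 (by simp)
  have hE : n ≤ E (fun _ : Fin n => none) := by
    unfold E
    simp
  exact ⟨(main_safe n).1 _ hcap hocc hE, (main_safe n).2 _ hcap hocc hE⟩
end

section
/- Let b : Fin n → Option Letter be a board that does not achieve SOS, and let i be any empty cell of b (b i = none). Then there exists a letter x ∈ {S, O} such that the board obtained from b by setting cell i to some x still does not achieve SOS. Consequently, in the misère SOS game a player always has a non-losing move whenever the board is not full. -/
open Letter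

lemma upd_ne {n : ℕ} (b : Fin n → Option Letter) (i : Fin n) (v : Option Letter)
    {p : Fin n} (hp : (p : ℕ) ≠ (i : ℕ)) : Function.update b i v p = b p := by
  rw [Function.update_apply, if_neg (by simpa [Fin.ext_iff] using hp)]

lemma sos_parts {n : ℕ} {b : Fin n → Option Letter} (h : Achieves [S, O, S] b) :
    ∃ k : ℕ, ∃ h2 : k + 2 < n,
      b ⟨k, by omega⟩ = some S ∧ b ⟨k + 1, by omega⟩ = some O ∧ b ⟨k + 2, h2⟩ = some S := by
  obtain ⟨k, hk⟩ := h
  obtain ⟨p0, e0⟩ := hk 0 (by norm_num)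
  obtain ⟨p1, e1⟩ := hk 1 (by norm_num)
  obtain ⟨p2, e2⟩ := hk 2 (by norm_num)
  exact ⟨k, p2, e0, e1, e2⟩

lemma sos_build {n : ℕ} {b : Fin n → Option Letter} (k : ℕ) (h2 : k + 2 < n)
    (hA : b ⟨k, by omega⟩ = some S) (hB : b ⟨k + 1, by omega⟩ = some O)
    (hC : b ⟨k + 2, h2⟩ = some S) : Achieves [S, O, S] b := by
  refine ⟨k, fun j hj => ?_⟩
  obtain _ | _ | _ | j := j
  · exact ⟨by omega, hA⟩
  · exact ⟨by omega, hB⟩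
  · exact ⟨by omega, hC⟩
  · exact absurd hj (by simp)

/-- If the board `b` does not achieve SOS and the cell `i` is empty, then some
letter `x` can be placed at `i` so that the resulting board still does not
achieve SOS.  Consequently, in the misère SOS game a player always has a
non-losing move whenever the board is not full. -/
theorem misere_sos_safe_move_exists {n : ℕ} (b : Fin n → Option Letter)
    (hb : ¬ Achieves [S, O, S] b) (i : Fin n) (hi : b i = none) :
    ∃ x : Letter, ¬ Achieves [S, O, S] (Function.update b i (some x)) := by
  by_contra h
  push_neg at h
  obtain ⟨k, hk2, hA, hB, hC⟩ := sos_parts (h O)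
  -- First, show that i must be the middle cell of the O-board pattern.
  have key : (i : ℕ) = k + 1 := by
    by_contra hne
    by_cases h0 : (i : ℕ) = k
    · have : (⟨k, by omega⟩ : Fin n) = i := by simp [Fin.ext_iff, h0]
      rw [this, Function.update_self] at hA
      simp at hA
    by_cases h2 : (i : ℕ) = k + 2
    · have : (⟨k + 2, hk2⟩ : Fin n) = i := by simp [Fin.ext_iff, h2]
      rw [this, Function.update_self] at hC
      simp at hC
    -- i is not among the pattern cells, so b itself achieves SOS.
    rw [upd_ne b i _ (show ((⟨k, by omega⟩ : Fin n) : ℕ) ≠ (i : ℕ) by simp; omega)] at hA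
    rw [upd_ne b i _ (show ((⟨k + 1, by omega⟩ : Fin n) : ℕ) ≠ (i : ℕ) by simp; omega)] at hB
    rw [upd_ne b i _ (show ((⟨k + 2, hk2⟩ : Fin n) : ℕ) ≠ (i : ℕ) by simp; omega)] at hC
    exact hb (sos_build k hk2 hA hB hC)
  -- With i the middle cell, the neighbors of i hold S on the board b itself.
  rw [upd_ne b i _ (show ((⟨k, by omega⟩ : Fin n) : ℕ) ≠ (i : ℕ) by simp; omega)] at hA
  rw [upd_ne b i _ (show ((⟨k + 2, hk2⟩ : Fin n) : ℕ) ≠ (i : ℕ) by simp; omega)] at hC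
  -- Now analyze the S-board pattern.
  obtain ⟨m, hm2, gA, gB, gC⟩ := sos_parts (h S)
  by_cases g1 : (i : ℕ) = m + 1
  · have : (⟨m + 1, by omega⟩ : Fin n) = i := by simp [Fin.ext_iff, g1]
    rw [this, Function.update_self] at gB
    simp at gB
  by_cases g0 : (i : ℕ) = m
  · -- m = k+1, so m+1 = k+2, and gB says that cell is O, contradicting hC.
    have e : (⟨m + 1, by omega⟩ : Fin n) = ⟨k + 2, hk2⟩ := by
      simp [Fin.ext_iff]; omega
    rw [e, upd_ne b i _ (show ((⟨k + 2, hk2⟩ : Fin n) : ℕ) ≠ (i : ℕ) by simp; omega), hC] at gB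
    simp at gB
  by_cases g2 : (i : ℕ) = m + 2
  · -- m+2 = k+1, so m+1 = k, and gB says that cell is O, contradicting hA.
    have e : (⟨m + 1, by omega⟩ : Fin n) = ⟨k, by omega⟩ := by
      simp [Fin.ext_iff]; omega
    rw [e, upd_ne b i _ (show ((⟨k, by omega⟩ : Fin n) : ℕ) ≠ (i : ℕ) by simp; omega), hA] at gB
    simp at gB
  -- i is not among the pattern cells, so b itself achieves SOS.
  rw [upd_ne b i _ (show ((⟨m, by omega⟩ : Fin n) : ℕ) ≠ (i : ℕ) by simp; omega)] at gA
  rw [upd_ne b i _ (show ((⟨m + 1, by omega⟩ : Fin n) : ℕ) ≠ (i : ℕ) by simp; omega)] at gB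
  rw [upd_ne b i _ (show ((⟨m + 2, hm2⟩ : Fin n) : ℕ) ≠ (i : ℕ) by simp; omega)] at gC
  exact hb (sos_build m hm2 gA gB gC)
end
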